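/- Let A be a type, B a finite type, E : A → B → Prop a relation (a bipartite graph), and d₂ a natural number. Suppose the bipartite graph is K_{d₂, 2^{d₂}}-free, and let c : B → (A → Bool) be any family of concepts such that for all a, b, c b a = true implies E a b. Then the concept class {c b : b ∈ B} is K_{d₂, 2^{d₂}}-free, and consequently there exists an online learner 𝔸 : List (A × Bool) → A → Bool that makes strictly fewer than 2·d₂ mistakes on every sequence of labeled examples with pairwise distinct points that is realizable by {c b : b ∈ B}. -/

import Mathlib

/-- The concept class `𝒞` contains `K_{s,t}`: there are a finite set `S ⊆ X` of size `s`
and a subset `𝒯 ⊆ 𝒞` of size `t` with `c x = true` for all `x ∈ S`, `c ∈ 𝒯`. -/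
def ContainsK {X : Type*} (𝒞 : Finset (X → Bool)) (s t : ℕ) : Prop :=
  ∃ S : Finset X, S.card = s ∧ ∃ 𝒯 ⊆ 𝒞, 𝒯.card = t ∧ ∀ x ∈ S, ∀ c ∈ 𝒯, c x = true

/-- Number of mistakes of the online learner `𝔸` on a sequence of labeled examples,
given the history `hist` of previously seen examples. -/
def mistakesAux {X : Type*} (𝔸 : List (X × Bool) → X → Bool)
    (hist : List (X × Bool)) : List (X × Bool) → ℕ
  | [] => 0
  | (x, y) :: rest =>
      (if 𝔸 hist x ≠ y then 1 else 0) + mistakesAux 𝔸 (hist ++ [(x, y)]) rest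

/-- Number of mistakes of the online learner `𝔸` on a sequence of labeled examples. -/
def mistakes {X : Type*} (𝔸 : List (X × Bool) → X → Bool) (L : List (X × Bool)) : ℕ :=
  mistakesAux 𝔸 [] L

/-!
A `K_{d,2^d}` in the concept class pulls back along `c` to one in the graph, since
`c b a = true` implies `E a b`. For the mistake bound, let `V` be the version space and `T`
the set of points labelled `true` so far, on which every concept of `V` is `true`. While
`2 ^ d ≤ |V|`, the learner predicts `true` only when all of `V` does, so it can only err on a
new positive point; this enlarges `T`, and `K_{d,2^d}`-freeness keeps `|T| < d`. Once
`|V| < 2 ^ d` it takes a majority vote, and each mistake halves `V`, which allows at most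
`log₂ (2 ^ d - 1) = d - 1` more mistakes. Formally, `(d - |T|) + log₂ (min |V| (2 ^ d - 1))`
drops by at least one at every mistake and never increases.
-/

theorem not_containsK_image_of_not_exists_biclique {A B : Type*} [Fintype B]
    [DecidableEq (A → Bool)] {E : A → B → Prop} {s t : ℕ}
    (hfree : ¬ ∃ (S : Finset A) (T : Finset B), S.card = s ∧ T.card = t ∧
        ∀ a ∈ S, ∀ b ∈ T, E a b)
    {c : B → A → Bool} (hc : ∀ (a : A) (b : B), c b a = true → E a b) :
    ¬ ContainsK (Finset.image c Finset.univ) s t := by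
  rintro ⟨S, hS, 𝒯, h𝒯, h𝒯card, hall⟩
  have hsurj : Set.SurjOn c (Finset.univ.filter fun b => c b ∈ 𝒯 : Finset B) (𝒯 : Set _) := by
    intro g hg
    obtain ⟨b, -, rfl⟩ := Finset.mem_image.mp (h𝒯 hg)
    exact ⟨b, by simpa using hg, rfl⟩
  obtain ⟨T, hT, hTcard⟩ := Finset.exists_subset_card_eq
    (h𝒯card ▸ Finset.card_le_card_of_surjOn c hsurj)
  exact hfree ⟨S, T, hS, hTcard, fun a ha b hb =>
    hc a b (hall a ha (c b) (Finset.mem_filter.mp (hT hb)).2)⟩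

section MistakeBound

variable {A : Type*}

def majorityVote (V : Finset (A → Bool)) (x : A) : Bool :=
  decide (V.card < 2 * (V.filter fun f => f x = true).card)

lemma two_mul_card_filter_le_of_majorityVote_ne {V : Finset (A → Bool)} {x : A} {y : Bool}
    (h : majorityVote V x ≠ y) : 2 * (V.filter fun f => f x = y).card ≤ V.card := by
  have hsplit := Finset.card_filter_add_card_filter_not (s := V) fun f => f x = true
  cases y <;> simp only [majorityVote, ne_eq, decide_eq_true_eq, decide_eq_false_iff_not,
    Bool.not_eq_true] at h hsplit ⊢ <;> omega

def versionSpace (𝒞 : Finset (A → Bool)) (hist : List (A × Bool)) : Finset (A → Bool) :=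
  𝒞.filter fun f => ∀ p ∈ hist, f p.1 = p.2

lemma versionSpace_append_singleton (𝒞 : Finset (A → Bool)) (hist : List (A × Bool))
    (x : A) (y : Bool) :
    versionSpace 𝒞 (hist ++ [(x, y)]) = (versionSpace 𝒞 hist).filter fun f => f x = y := by
  ext f
  simp [versionSpace, or_imp, forall_and, and_assoc]

lemma versionSpace_append_subset (𝒞 : Finset (A → Bool)) (hist l : List (A × Bool)) :
    versionSpace 𝒞 (hist ++ l) ⊆ versionSpace 𝒞 hist :=
  Finset.monotone_filter_right _ fun _ _ hf p hp => hf p (List.mem_append_left l hp)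

open Classical in
noncomputable def positivePoints (hist : List (A × Bool)) : Finset A :=
  ((hist.filter (·.2)).map Prod.fst).toFinset

lemma mem_positivePoints {hist : List (A × Bool)} {a : A} :
    a ∈ positivePoints hist ↔ (a, true) ∈ hist := by
  simp [positivePoints]

lemma positivePoints_subset_append (hist l : List (A × Bool)) :
    positivePoints hist ⊆ positivePoints (hist ++ l) := fun _ ha =>
  mem_positivePoints.mpr (List.mem_append_left l (mem_positivePoints.mp ha))

lemma card_positivePoints_append_true {hist : List (A × Bool)} {x : A}
    (hx : x ∉ hist.map Prod.fst) :
    (positivePoints (hist ++ [(x, true)])).card = (positivePoints hist).card + 1 := by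
  classical
  have hxT : x ∉ positivePoints hist := fun h =>
    hx (List.mem_map.mpr ⟨_, mem_positivePoints.mp h, rfl⟩)
  have hins : positivePoints (hist ++ [(x, true)]) = insert x (positivePoints hist) := by
    ext a
    simp [mem_positivePoints, or_comm]
  rw [hins, Finset.card_insert_of_notMem hxT]

lemma card_positivePoints_lt {𝒞 : Finset (A → Bool)} {d : ℕ} (hK : ¬ ContainsK 𝒞 d (2 ^ d))
    {hist : List (A × Bool)} (hV : 2 ^ d ≤ (versionSpace 𝒞 hist).card) :
    (positivePoints hist).card < d := by
  by_contra! h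
  obtain ⟨S, hS, hScard⟩ := Finset.exists_subset_card_eq h
  obtain ⟨𝒯, h𝒯, h𝒯card⟩ := Finset.exists_subset_card_eq hV
  refine hK ⟨S, hScard, 𝒯, h𝒯.trans (Finset.filter_subset _ _), h𝒯card, fun a ha g hg => ?_⟩
  exact (Finset.mem_filter.mp (h𝒯 hg)).2 (a, true) (mem_positivePoints.mp (hS ha))

def conservativeHalvingLearner (𝒞 : Finset (A → Bool)) (d : ℕ) (hist : List (A × Bool))
    (x : A) : Bool :=
  if 2 ^ d ≤ (versionSpace 𝒞 hist).card then
    decide (∀ f ∈ versionSpace 𝒞 hist, f x = true)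
  else
    majorityVote (versionSpace 𝒞 hist) x

noncomputable def mistakePotential (𝒞 : Finset (A → Bool)) (d : ℕ) (hist : List (A × Bool)) :
    ℕ :=
  (d - (positivePoints hist).card) + Nat.log 2 (min (versionSpace 𝒞 hist).card (2 ^ d - 1))

variable {𝒞 : Finset (A → Bool)} {d : ℕ}

lemma mistakePotential_append_le (hist l : List (A × Bool)) :
    mistakePotential 𝒞 d (hist ++ l) ≤ mistakePotential 𝒞 d hist :=
  add_le_add
    (Nat.sub_le_sub_left (Finset.card_le_card (positivePoints_subset_append hist l)) d)
    (Nat.log_mono_right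
      (min_le_min_right _ (Finset.card_le_card (versionSpace_append_subset 𝒞 hist l))))

lemma mistakePotential_nil_lt (hd : d ≠ 0) : mistakePotential 𝒞 d [] < 2 * d := by
  have hlog : Nat.log 2 (min (versionSpace 𝒞 []).card (2 ^ d - 1)) < d :=
    Nat.log_lt_of_lt_pow' hd (by have := Nat.one_le_two_pow (n := d); omega)
  simp only [mistakePotential, positivePoints, List.filter_nil, List.map_nil,
    List.toFinset_nil, Finset.card_empty]
  omega

lemma mistake_add_mistakePotential_le (hK : ¬ ContainsK 𝒞 d (2 ^ d))
    {hist : List (A × Bool)} {x : A} {y : Bool} {f : A → Bool}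
    (hf : f ∈ versionSpace 𝒞 (hist ++ [(x, y)])) (hx : x ∉ hist.map Prod.fst) :
    (if conservativeHalvingLearner 𝒞 d hist x ≠ y then 1 else 0) +
      mistakePotential 𝒞 d (hist ++ [(x, y)]) ≤ mistakePotential 𝒞 d hist := by
  have hle := mistakePotential_append_le (𝒞 := 𝒞) (d := d) hist [(x, y)]
  have hT := Finset.card_le_card (positivePoints_subset_append hist [(x, y)])
  have hV := Finset.card_le_card (versionSpace_append_subset 𝒞 hist [(x, y)])
  by_cases hmis : conservativeHalvingLearner 𝒞 d hist x ≠ y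
  swap
  · simpa [hmis] using hle
  rw [if_pos hmis]
  unfold conservativeHalvingLearner at hmis
  split_ifs at hmis with hbig
  · have hfx : f x = y := (Finset.mem_filter.mp hf).2 (x, y) (by simp)
    have hy : y = true := by
      by_contra hy
      simp only [Bool.not_eq_true] at hy
      subst hy
      have hall : ∀ g ∈ versionSpace 𝒞 hist, g x = true := by simpa using hmis
      simp [hall f (versionSpace_append_subset 𝒞 hist _ hf)] at hfx
    subst hy
    have hTlt := card_positivePoints_lt hK hbig
    have hlog := Nat.log_mono_right (b := 2) (min_le_min_right (2 ^ d - 1) hV)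
    have hTcard := card_positivePoints_append_true hx
    unfold mistakePotential
    omega
  · have hhalf := two_mul_card_filter_le_of_majorityVote_ne hmis
    rw [← versionSpace_append_singleton] at hhalf
    have hpos : (versionSpace 𝒞 (hist ++ [(x, y)])).card ≠ 0 :=
      Finset.card_ne_zero_of_mem hf
    have hlog : Nat.log 2 (versionSpace 𝒞 (hist ++ [(x, y)])).card + 1 ≤
        Nat.log 2 (versionSpace 𝒞 hist).card := by
      rw [← Nat.log_mul_base one_lt_two hpos]
      exact Nat.log_mono_right (by omega)
    unfold mistakePotential
    rw [min_eq_left (by omega), min_eq_left (by omega)]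
    omega

lemma mistakesAux_le_mistakePotential (hK : ¬ ContainsK 𝒞 d (2 ^ d)) {f : A → Bool} :
    ∀ (L hist : List (A × Bool)), f ∈ versionSpace 𝒞 (hist ++ L) →
      ((hist ++ L).map Prod.fst).Nodup →
      mistakesAux (conservativeHalvingLearner 𝒞 d) hist L ≤ mistakePotential 𝒞 d hist
  | [], _, _, _ => Nat.zero_le _
  | (x, y) :: rest, hist, hf, hnd => by
    have hassoc : hist ++ (x, y) :: rest = (hist ++ [(x, y)]) ++ rest := by simp
    rw [hassoc] at hf hnd
    have hx : x ∉ hist.map Prod.fst := by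
      simp only [List.map_append, List.append_assoc, List.map_cons,
        List.singleton_append, List.nodup_append, List.nodup_cons] at hnd
      exact fun h => hnd.2.2 x h x (by simp) rfl
    have ih := mistakesAux_le_mistakePotential hK rest (hist ++ [(x, y)]) hf hnd
    have hstep := mistake_add_mistakePotential_le hK (versionSpace_append_subset 𝒞 _ rest hf) hx
    simp only [mistakesAux]
    omega

theorem mistakes_conservativeHalvingLearner_lt (hK : ¬ ContainsK 𝒞 d (2 ^ d))
    {L : List (A × Bool)} (hL : (L.map Prod.fst).Nodup)
    {f : A → Bool} (hf : f ∈ 𝒞) (hfL : ∀ p ∈ L, f p.1 = p.2) :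
    mistakes (conservativeHalvingLearner 𝒞 d) L < 2 * d := by
  have hd : d ≠ 0 := by
    rintro rfl
    exact hK ⟨∅, rfl, {f}, Finset.singleton_subset_iff.mpr hf, rfl, by simp⟩
  have hfV : f ∈ versionSpace 𝒞 ([] ++ L) := Finset.mem_filter.mpr ⟨hf, hfL⟩
  exact (mistakesAux_le_mistakePotential hK L [] hfV hL).trans_lt (mistakePotential_nil_lt hd)

end MistakeBound

theorem soundness_reduction {A B : Type*} [Fintype B] [DecidableEq (A → Bool)]
    (E : A → B → Prop) (d₂ : ℕ)
    (hfree : ¬ ∃ (S : Finset A) (T : Finset B), S.card = d₂ ∧ T.card = 2 ^ d₂ ∧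
        ∀ a ∈ S, ∀ b ∈ T, E a b)
    (c : B → (A → Bool)) (hc : ∀ (a : A) (b : B), c b a = true → E a b) :
    ¬ ContainsK (Finset.image c Finset.univ) d₂ (2 ^ d₂) ∧
      ∃ 𝔸 : List (A × Bool) → A → Bool,
        ∀ L : List (A × Bool),
          (L.map Prod.fst).Nodup →
          (∃ f ∈ Finset.image c Finset.univ, ∀ p ∈ L, f p.1 = p.2) →
          mistakes 𝔸 L < 2 * d₂ := by
  have hK := not_containsK_image_of_not_exists_biclique hfree hc
  exact ⟨hK, conservativeHalvingLearner _ d₂, fun L hL ⟨f, hf, hfL⟩ =>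
    mistakes_conservativeHalvingLearner_lt hK hL hf hfL⟩
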